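/- arXiv:2512.03982 — 5 statements merged into one kernel-verified Lean document; each statement's English description precedes it below -/
import Mathlib

section
/- Let (S, Σ, P) be a probability space and let Π(s) and Π'(s) be two non-null measurable sets each containing s. Suppose P(Π(s) \ Π'(s) | Π(s)) ≤ ε and P(Π'(s) \ Π(s) | Π'(s)) ≤ ε with ε ∈ (0, 1/2). Then for every measurable G ⊆ S, |P(G | Π(s)) − P(G | Π'(s))| ≤ ε. -/
open MeasureTheory

/-- Conditional probability `P(A | B) = P(A ∩ B) / P(B)` as a real number. -/
noncomputable def condProb {Ω : Type*} [MeasurableSpace Ω] (μ : Measure Ω) (A B : Set Ω) : ℝ :=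
  (μ (A ∩ B)).toReal / (μ B).toReal

lemma key_arith (a b c x y z dAB dBA ε : ℝ) (ha : 0 < a) (hb : 0 < b)
    (hx : 0 ≤ x) (hz : 0 ≤ z) (hxc : x ≤ c) (hy : y ≤ dAB)
    (hca : c + dAB = a) (hcb : c + dBA = b)
    (h1 : dAB ≤ ε * a) (h2 : dBA ≤ ε * b) :
    (x + y) / a - (x + z) / b ≤ ε := by
  rw [div_sub_div _ _ ha.ne' hb.ne', div_le_iff₀ (mul_pos ha hb)]
  rcases le_total a b with hab | hab
  · nlinarith [mul_nonneg hz ha.le, mul_le_mul_of_nonneg_right hxc (sub_nonneg.mpr hab),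
      mul_le_mul_of_nonneg_left h2 ha.le]
  · nlinarith [mul_nonneg hz ha.le, mul_le_mul_of_nonneg_right hxc (sub_nonneg.mpr hab),
      mul_le_mul_of_nonneg_left h1 hb.le, mul_le_mul_of_nonneg_left hy hb.le,
      mul_nonneg hx (sub_nonneg.mpr hab)]

theorem stmt_5 {S : Type*} [MeasurableSpace S] (P : Measure S) [IsProbabilityMeasure P]
    (A B : Set S) (hA : MeasurableSet A) (hB : MeasurableSet B)
    (s : S) (hsA : s ∈ A) (hsB : s ∈ B)
    (hA0 : P A ≠ 0) (hB0 : P B ≠ 0)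
    (ε : ℝ) (hε0 : 0 < ε) (hε2 : ε < 1 / 2)
    (h1 : condProb P (A \ B) A ≤ ε) (h2 : condProb P (B \ A) B ≤ ε) :
    ∀ G : Set S, MeasurableSet G → |condProb P G A - condProb P G B| ≤ ε := by
  intro G hG
  set a := (P A).toReal with ha_def
  set b := (P B).toReal with hb_def
  set c := (P (A ∩ B)).toReal with hc_def
  set x := (P (G ∩ A ∩ B)).toReal with hx_def
  set y := (P (G ∩ (A \ B))).toReal with hy_def
  set z := (P (G ∩ (B \ A))).toReal with hz_def
  set dAB := (P (A \ B)).toReal with hdAB_def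
  set dBA := (P (B \ A)).toReal with hdBA_def
  have ha : 0 < a := ENNReal.toReal_pos hA0 (measure_ne_top P A)
  have hb : 0 < b := ENNReal.toReal_pos hB0 (measure_ne_top P B)
  have hGA : x + y = (P (G ∩ A)).toReal := by
    have := measure_inter_add_diff (μ := P) (G ∩ A) hB
    rw [Set.inter_diff_assoc] at this
    rw [hx_def, hy_def, ← ENNReal.toReal_add (measure_ne_top _ _) (measure_ne_top _ _), this]
  have hGB : x + z = (P (G ∩ B)).toReal := by
    have := measure_inter_add_diff (μ := P) (G ∩ B) hA
    rw [Set.inter_diff_assoc, Set.inter_right_comm] at this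
    rw [hx_def, hz_def, ← ENNReal.toReal_add (measure_ne_top _ _) (measure_ne_top _ _), this]
  have hca : c + dAB = a := by
    have := measure_inter_add_diff (μ := P) A hB
    rw [hc_def, hdAB_def, ← ENNReal.toReal_add (measure_ne_top _ _) (measure_ne_top _ _), this]
  have hcb : c + dBA = b := by
    have := measure_inter_add_diff (μ := P) B hA
    rw [Set.inter_comm B A] at this
    rw [hc_def, hdBA_def, ← ENNReal.toReal_add (measure_ne_top _ _) (measure_ne_top _ _), this]
  have h1' : dAB ≤ ε * a := by
    have : condProb P (A \ B) A = dAB / a := by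
      rw [condProb, Set.inter_eq_left.mpr Set.diff_subset]
    rw [this, div_le_iff₀ ha] at h1
    linarith
  have h2' : dBA ≤ ε * b := by
    have : condProb P (B \ A) B = dBA / b := by
      rw [condProb, Set.inter_eq_left.mpr Set.diff_subset]
    rw [this, div_le_iff₀ hb] at h2
    linarith
  have hx0 : 0 ≤ x := ENNReal.toReal_nonneg
  have hy0 : 0 ≤ y := ENNReal.toReal_nonneg
  have hz0 : 0 ≤ z := ENNReal.toReal_nonneg
  have hxc : x ≤ c := ENNReal.toReal_mono (measure_ne_top _ _)
    (measure_mono (Set.inter_subset_inter_left B Set.inter_subset_right))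
  have hydAB : y ≤ dAB := ENNReal.toReal_mono (measure_ne_top _ _)
    (measure_mono Set.inter_subset_right)
  have hzdBA : z ≤ dBA := ENNReal.toReal_mono (measure_ne_top _ _)
    (measure_mono Set.inter_subset_right)
  have hcA : condProb P G A = (x + y) / a := by rw [condProb, ← hGA]
  have hcB : condProb P G B = (x + z) / b := by rw [condProb, ← hGB]
  rw [hcA, hcB, abs_le]
  constructor
  · have := key_arith b a c x z y dBA dAB ε hb ha hx0 hy0 hxc hzdBA hcb hca h2' h1'
    linarith
  · exact key_arith a b c x y z dAB dBA ε ha hb hx0 hz0 hxc hydAB hca hcb h1' h2'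
end

section
/- Let (S, Σ, P) be a probability space with countable measurable partition Π' into non-null cells, T a countable type space, τ' : S → T a Π'-labeling (τ'(s) determines and is determined by the cell Π'(s)), and μ' the pushforward of P under ι × τ'. For any measurable E ⊆ S, any p ∈ [0,1], and any m ≥ 1: if s lies in the m-fold iterated mutual p-belief (B^p_{Π'})^m(E), then (s, τ'(s)) lies in (B^p_{μ'})^m((ι × τ')(E)), where belief operators on S × T are defined via conditional probabilities given types under μ'. Consequently, s ∈ C^p_{Π'}(E) implies (s, τ'(s)) ∈ C^p_{μ'}((ι × τ')(E)). (Lemma 3: common p-belief is preserved under labeling.) -/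
open MeasureTheory

/-- Mutual p-belief operator on the state space `S`, for the partitions generated by the
labelings `fun s => τ' s i`: player `i`'s cell at `s` is `{s' | τ' s' i = τ' s i}`. -/
noncomputable def BS {S : Type*} [MeasurableSpace S] {N : ℕ} {Ti : Fin N → Type*}
    (P : Measure S) (τ' : S → ∀ i, Ti i) (p : ℝ) (E : Set S) : Set S :=
  ⋂ i, {s | p ≤ condProb P E {s' | τ' s' i = τ' s i}}

/-- Common p-belief operator on the state space. -/
noncomputable def CS {S : Type*} [MeasurableSpace S] {N : ℕ} {Ti : Fin N → Type*}
    (P : Measure S) (τ' : S → ∀ i, Ti i) (p : ℝ) (E : Set S) : Set S :=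
  ⋂ m : ℕ, (BS P τ' p)^[m + 1] E

/-- Mutual p-belief operator on KM states `S × T` under a common prior `μ`: player `i`
p-believes `E` at `x` if the marginal of `x`'s type is null or the conditional probability
of `E` given the type is at least `p`. -/
noncomputable def BT {S : Type*} [MeasurableSpace S] {N : ℕ} {Ti : Fin N → Type*}
    [∀ i, MeasurableSpace (Ti i)]
    (μ : Measure (S × ∀ i, Ti i)) (p : ℝ) (E : Set (S × ∀ i, Ti i)) :
    Set (S × ∀ i, Ti i) :=
  ⋂ i, {x | μ {y | y.2 i = x.2 i} = 0 ∨ p ≤ condProb μ E {y | y.2 i = x.2 i}}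

/-- Common p-belief operator on KM states. -/
noncomputable def CT {S : Type*} [MeasurableSpace S] {N : ℕ} {Ti : Fin N → Type*}
    [∀ i, MeasurableSpace (Ti i)]
    (μ : Measure (S × ∀ i, Ti i)) (p : ℝ) (E : Set (S × ∀ i, Ti i)) :
    Set (S × ∀ i, Ti i) :=
  ⋂ m : ℕ, (BT μ p)^[m + 1] E

theorem stmt_9 {S : Type*} [MeasurableSpace S] {N : ℕ} {Ti : Fin N → Type*}
    [∀ i, Countable (Ti i)] [∀ i, MeasurableSpace (Ti i)]
    [∀ i, MeasurableSingletonClass (Ti i)]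
    (P : Measure S) [IsProbabilityMeasure P]
    (τ' : S → ∀ i, Ti i) (hτ' : Measurable τ')
    (hcell : ∀ i s, P {s' | τ' s' i = τ' s i} ≠ 0)
    (p : ℝ) (E : Set S) (hE : MeasurableSet E) :
    (∀ m : ℕ, ∀ s : S, s ∈ (BS P τ' p)^[m + 1] E →
        (s, τ' s) ∈ (BT (Measure.map (fun x => (x, τ' x)) P) p)^[m + 1]
          ((fun x => (x, τ' x)) '' E)) ∧
      ∀ s : S, s ∈ CS P τ' p E →
        (s, τ' s) ∈ CT (Measure.map (fun x => (x, τ' x)) P) p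
          ((fun x => (x, τ' x)) '' E) := by
  set g : S → S × (∀ i, Ti i) := fun x => (x, τ' x) with hgdef
  have hg : Measurable g := measurable_id.prodMk hτ'
  have hginj : Function.Injective g := fun a b h => congrArg Prod.fst h
  set μ : Measure (S × ∀ i, Ti i) := Measure.map g P with hμ
  -- measurability of cells
  have hcellT : ∀ (i : Fin N) (t : Ti i), MeasurableSet {y : S × ∀ j, Ti j | y.2 i = t} :=
    fun i t => ((measurable_pi_apply i).comp measurable_snd) (measurableSet_singleton t)
  have hpre : ∀ (i : Fin N) (t : Ti i), g ⁻¹' {y | y.2 i = t} = {s | τ' s i = t} := by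
    intro i t; rfl
  have hmap : ∀ F : Set (S × ∀ i, Ti i), MeasurableSet F → μ F = P (g ⁻¹' F) := by
    intro F hF; rw [hμ, Measure.map_apply hg hF]
  -- graph measurable, so images of measurable sets are measurable
  have hgraph : MeasurableSet {y : S × ∀ i, Ti i | τ' y.1 = y.2} := by
    have : {y : S × ∀ i, Ti i | τ' y.1 = y.2} = ⋂ i, {y | τ' y.1 i = y.2 i} := by
      ext y; simp [funext_iff]
    rw [this]
    exact MeasurableSet.iInter fun i =>
      measurableSet_eq_fun ((measurable_pi_apply i).comp (hτ'.comp measurable_fst))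
        ((measurable_pi_apply i).comp measurable_snd)
  have himg : ∀ F : Set S, MeasurableSet F → MeasurableSet (g '' F) := by
    intro F hF
    have : g '' F = (Prod.fst ⁻¹' F) ∩ {y : S × ∀ i, Ti i | τ' y.1 = y.2} := by
      ext y
      constructor
      · rintro ⟨x, hx, rfl⟩; exact ⟨hx, rfl⟩
      · rintro ⟨ha, hb⟩; exact ⟨y.1, ha, Prod.ext rfl hb⟩
    rw [this]
    exact (measurable_fst hF).inter hgraph
  -- key step lemma
  have key : ∀ (F : Set S) (F' : Set (S × ∀ i, Ti i)), MeasurableSet F' → g ⁻¹' F' = F →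
      MeasurableSet (BT μ p F') ∧ g ⁻¹' (BT μ p F') = BS P τ' p F := by
    intro F F' hF' hgF
    constructor
    · refine MeasurableSet.iInter fun i => ?_
      have : {x : S × ∀ j, Ti j |
            μ {y | y.2 i = x.2 i} = 0 ∨ p ≤ condProb μ F' {y | y.2 i = x.2 i}}
          = (fun x : S × ∀ j, Ti j => x.2 i) ⁻¹'
            {t | μ {y | y.2 i = t} = 0 ∨ p ≤ condProb μ F' {y | y.2 i = t}} := rfl
      rw [this]
      exact ((measurable_pi_apply i).comp measurable_snd)
        (Set.to_countable _).measurableSet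
    · rw [BT, BS, Set.preimage_iInter]
      refine Set.iInter_congr fun i => ?_
      ext s
      have hc : μ {y | y.2 i = τ' s i} = P {s' | τ' s' i = τ' s i} := by
        rw [hmap _ (hcellT i (τ' s i)), hpre]
      have hcond : condProb μ F' {y | y.2 i = τ' s i}
          = condProb P F {s' | τ' s' i = τ' s i} := by
        unfold condProb
        rw [hmap _ (hF'.inter (hcellT i (τ' s i))), Set.preimage_inter, hgF, hpre, hc]
      simp only [Set.mem_preimage, Set.mem_setOf_eq, hgdef]
      rw [hcond, hc]
      simp [hcell i s]
  -- induction
  have main : ∀ m : ℕ, MeasurableSet ((BT μ p)^[m + 1] (g '' E)) ∧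
      g ⁻¹' ((BT μ p)^[m + 1] (g '' E)) = (BS P τ' p)^[m + 1] E := by
    intro m
    induction m with
    | zero =>
      simpa using key E (g '' E) (himg E hE) (Set.preimage_image_eq E hginj)
    | succ n ih =>
      have := key _ _ ih.1 ih.2
      simpa only [Function.iterate_succ_apply'] using this
  have h1 : ∀ m : ℕ, ∀ s : S, s ∈ (BS P τ' p)^[m + 1] E →
      g s ∈ (BT μ p)^[m + 1] (g '' E) := by
    intro m s hs
    have := (main m).2
    rw [← this] at hs
    exact hs
  refine ⟨h1, fun s hs => ?_⟩
  rw [CT]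
  refine Set.mem_iInter.2 fun m => h1 m s ?_
  exact Set.mem_iInter.1 hs m
end

section
/- Let (S, Σ, P) be a probability space, Π and Π' countable partitions into non-null cells (for a single player), and τ, τ' : S → T measurable labelings of Π and Π' respectively, with μ, μ' the pushforwards of P under ι × τ and ι × τ'. Suppose for some s, τ(s) = τ'(s) = t, μ(t) > 0, μ'(t) > 0, but P(Π(s) \ Π'(s) | Π(s)) > ε. Then taking G = Π(s) \ Π'(s), |μ(G × T | t) − μ'(G × T | t)| > ε; hence (s, τ'(s)) ∉ A_{μ,μ'}(ε). (Contrapositive step of Lemma 6: KM-closeness of beliefs at a shared type forces MS-closeness of the corresponding cells.) -/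
open MeasureTheory

/-- The set `A_{μ,μ'}(ε)` of KM states at which both type marginals are positive and the
conditional probabilities of every measurable rectangle given the type differ by at most `ε`
(single-player version). -/
noncomputable def Aset {S T : Type*} [MeasurableSpace S] [MeasurableSpace T]
    (μ μ' : Measure (S × T)) (ε : ℝ) : Set (S × T) :=
  {x | μ {y | y.2 = x.2} ≠ 0 ∧ μ' {y | y.2 = x.2} ≠ 0 ∧
    ∀ E : Set S, ∀ F : Set T, MeasurableSet E → MeasurableSet F →
      |condProb μ (E ×ˢ F) {y | y.2 = x.2} - condProb μ' (E ×ˢ F) {y | y.2 = x.2}| ≤ ε}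

theorem stmt_10 {S T : Type*} [MeasurableSpace S] [MeasurableSpace T]
    [Countable T] [MeasurableSingletonClass T]
    (P : Measure S) [IsProbabilityMeasure P]
    (τ τ' : S → T) (hτ : Measurable τ) (hτ' : Measurable τ')
    (μ μ' : Measure (S × T))
    (hμ : μ = Measure.map (fun x => (x, τ x)) P)
    (hμ' : μ' = Measure.map (fun x => (x, τ' x)) P)
    (s : S) (t : T) (ht : τ s = t) (ht' : τ' s = t)
    (hpos : μ {y | y.2 = t} ≠ 0) (hpos' : μ' {y | y.2 = t} ≠ 0)
    (ε : ℝ) (hε : 0 ≤ ε)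
    (hgt : ε < condProb P (τ ⁻¹' {τ s} \ τ' ⁻¹' {τ' s}) (τ ⁻¹' {τ s})) :
    ε < |condProb μ ((τ ⁻¹' {τ s} \ τ' ⁻¹' {τ' s}) ×ˢ (Set.univ : Set T)) {y | y.2 = t} -
          condProb μ' ((τ ⁻¹' {τ s} \ τ' ⁻¹' {τ' s}) ×ˢ (Set.univ : Set T)) {y | y.2 = t}| ∧
      (s, τ' s) ∉ Aset μ μ' ε := by
  set G : Set S := τ ⁻¹' {τ s} \ τ' ⁻¹' {τ' s} with hG
  have hGm : MeasurableSet G :=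
    (hτ (measurableSet_singleton _)).diff (hτ' (measurableSet_singleton _))
  have hTm : MeasurableSet {y : S × T | y.2 = t} :=
    measurable_snd (measurableSet_singleton t)
  have hmap : Measurable fun x : S => (x, τ x) := measurable_id.prodMk hτ
  have hmap' : Measurable fun x : S => (x, τ' x) := measurable_id.prodMk hτ'
  -- compute the three measures
  have hden : μ {y : S × T | y.2 = t} = P (τ ⁻¹' {t}) := by
    rw [hμ, Measure.map_apply hmap hTm]; rfl
  have hnum : μ ((G ×ˢ (Set.univ : Set T)) ∩ {y : S × T | y.2 = t})
      = P (G ∩ τ ⁻¹' {t}) := by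
    rw [hμ, Measure.map_apply hmap ((hGm.prod MeasurableSet.univ).inter hTm)]
    congr 1
    ext x
    simp [Set.mem_preimage, Set.mem_inter_iff, Set.mem_prod]
  have hnum' : μ' ((G ×ˢ (Set.univ : Set T)) ∩ {y : S × T | y.2 = t}) = 0 := by
    rw [hμ', Measure.map_apply hmap' ((hGm.prod MeasurableSet.univ).inter hTm)]
    have hemp : (fun x : S => (x, τ' x)) ⁻¹' ((G ×ˢ (Set.univ : Set T)) ∩ {y : S × T | y.2 = t}) = ∅ := by
      ext x
      simp only [Set.mem_preimage, Set.mem_inter_iff, Set.mem_prod, Set.mem_setOf_eq,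
      Set.mem_empty_iff_false, iff_false, not_and, hG, Set.mem_diff]
      rintro ⟨⟨_, hx2⟩, -⟩ hx3
      exact hx2 (by rw [ht']; exact hx3)
    rw [hemp, measure_empty]
  have hc' : condProb μ' (G ×ˢ (Set.univ : Set T)) {y : S × T | y.2 = t} = 0 := by
    unfold condProb; rw [hnum']; simp
  have hc : condProb μ (G ×ˢ (Set.univ : Set T)) {y : S × T | y.2 = t}
      = condProb P G (τ ⁻¹' {τ s}) := by
    unfold condProb
    rw [hnum, hden, ht]
  have key : ε < |condProb μ (G ×ˢ (Set.univ : Set T)) {y : S × T | y.2 = t} -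
      condProb μ' (G ×ˢ (Set.univ : Set T)) {y : S × T | y.2 = t}| := by
    rw [hc, hc', sub_zero, abs_of_nonneg]
    · exact hgt
    · exact le_of_lt (lt_of_le_of_lt hε hgt)
  refine ⟨key, fun hmem => ?_⟩
  obtain ⟨-, -, h3⟩ := hmem
  have := h3 G Set.univ hGm MeasurableSet.univ
  simp only [ht'] at this
  exact absurd this (not_le.mpr key)
end

section
/- Let (S, Σ, P) be a probability space, τ, τ' : S → T measurable with T countable, and μ, μ' the pushforwards of P under ι×τ and ι×τ' respectively. Fix s with t := τ(s) = τ'(s), μ(t) > 0, μ'(t) > 0. Let D := {s' : τ(s') ≠ τ'(s')} and E := {s' ∈ D : τ'(s') = t}. If |μ(E × T | t) − μ'(E × T | t)| ≤ ε, then P(D | τ'⁻¹(t)) ≤ ε. -/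
open MeasureTheory

theorem stmt_11 {S T : Type*} [MeasurableSpace S] [MeasurableSpace T]
    [Countable T] [MeasurableSingletonClass T]
    (P : Measure S) [IsProbabilityMeasure P]
    (τ τ' : S → T) (hτ : Measurable τ) (hτ' : Measurable τ')
    (μ μ' : Measure (S × T))
    (hμ : μ = Measure.map (fun x => (x, τ x)) P)
    (hμ' : μ' = Measure.map (fun x => (x, τ' x)) P)
    (s : S) (t : T) (ht : τ s = t) (ht' : τ' s = t)
    (hpos : P (τ ⁻¹' {t}) ≠ 0) (hpos' : P (τ' ⁻¹' {t}) ≠ 0)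
    (ε : ℝ)
    (hb : |condProb μ ({s' | τ s' ≠ τ' s' ∧ τ' s' = t} ×ˢ (Set.univ : Set T)) {y | y.2 = t} -
            condProb μ' ({s' | τ s' ≠ τ' s' ∧ τ' s' = t} ×ˢ (Set.univ : Set T)) {y | y.2 = t}|
          ≤ ε) :
    condProb P {s' | τ s' ≠ τ' s'} (τ' ⁻¹' {t}) ≤ ε := by
  -- measurability of the disagreement set
  have hDeq : MeasurableSet {s' | τ s' = τ' s'} := by
    have : {s' | τ s' = τ' s'} = ⋃ u : T, τ ⁻¹' {u} ∩ τ' ⁻¹' {u} := by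
      ext x
      simp only [Set.mem_setOf_eq, Set.mem_iUnion, Set.mem_inter_iff, Set.mem_preimage,
        Set.mem_singleton_iff]
      exact ⟨fun h => ⟨τ' x, h, rfl⟩, fun ⟨u, h1, h2⟩ => h1.trans h2.symm⟩
    rw [this]
    exact MeasurableSet.iUnion fun u =>
      (hτ (measurableSet_singleton u)).inter (hτ' (measurableSet_singleton u))
  have hD : MeasurableSet {s' | τ s' ≠ τ' s'} := hDeq.compl
  have hE : MeasurableSet {s' | τ s' ≠ τ' s' ∧ τ' s' = t} := by
    have : {s' | τ s' ≠ τ' s' ∧ τ' s' = t} = {s' | τ s' ≠ τ' s'} ∩ τ' ⁻¹' {t} := rfl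
    rw [this]; exact hD.inter (hτ' (measurableSet_singleton t))
  have hExT : MeasurableSet ({s' | τ s' ≠ τ' s' ∧ τ' s' = t} ×ˢ (Set.univ : Set T)) :=
    hE.prod MeasurableSet.univ
  have hcell : MeasurableSet {y : S × T | y.2 = t} :=
    measurable_snd (measurableSet_singleton t)
  have hm : Measurable (fun x : S => (x, τ x)) := measurable_id.prodMk hτ
  have hm' : Measurable (fun x : S => (x, τ' x)) := measurable_id.prodMk hτ'
  -- first conditional probability is zero
  have h1 : condProb μ ({s' | τ s' ≠ τ' s' ∧ τ' s' = t} ×ˢ (Set.univ : Set T)) {y | y.2 = t} = 0 := by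
    unfold condProb
    have : μ (({s' | τ s' ≠ τ' s' ∧ τ' s' = t} ×ˢ (Set.univ : Set T)) ∩ {y | y.2 = t}) = 0 := by
      rw [hμ, Measure.map_apply hm (hExT.inter hcell)]
      have hempty : (fun x : S => (x, τ x)) ⁻¹'
          (({s' | τ s' ≠ τ' s' ∧ τ' s' = t} ×ˢ (Set.univ : Set T)) ∩ {y | y.2 = t}) = ∅ := by
        ext x
        simp only [Set.mem_preimage, Set.mem_inter_iff, Set.mem_prod, Set.mem_setOf_eq,
          Set.mem_univ, and_true, Set.mem_empty_iff_false, iff_false, not_and]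
        rintro ⟨hne, heq⟩ hxt
        exact hne (hxt.trans heq.symm)
      rw [hempty]; exact measure_empty
    rw [this]; simp
  -- second conditional probability equals the goal's LHS
  have h2 : condProb μ' ({s' | τ s' ≠ τ' s' ∧ τ' s' = t} ×ˢ (Set.univ : Set T)) {y | y.2 = t}
      = condProb P {s' | τ s' ≠ τ' s'} (τ' ⁻¹' {t}) := by
    unfold condProb
    have hnum : μ' (({s' | τ s' ≠ τ' s' ∧ τ' s' = t} ×ˢ (Set.univ : Set T)) ∩ {y | y.2 = t})
        = P ({s' | τ s' ≠ τ' s'} ∩ τ' ⁻¹' {t}) := by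
      rw [hμ', Measure.map_apply hm' (hExT.inter hcell)]
      congr 1
      ext x
      simp only [Set.mem_preimage, Set.mem_inter_iff, Set.mem_prod, Set.mem_setOf_eq,
        Set.mem_univ, and_true, Set.mem_singleton_iff]
      tauto
    have hden : μ' {y : S × T | y.2 = t} = P (τ' ⁻¹' {t}) := by
      rw [hμ', Measure.map_apply hm' hcell]
      rfl
    rw [hnum, hden]
  rw [h1, h2, zero_sub, abs_neg] at hb
  calc condProb P {s' | τ s' ≠ τ' s'} (τ' ⁻¹' {t})
      ≤ |condProb P {s' | τ s' ≠ τ' s'} (τ' ⁻¹' {t})| := le_abs_self _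
    _ ≤ ε := hb
end

section
/- Let Ω be a countable probability space with measure ν, and let B^p be the mutual p-belief operator for N players with countable partitions. For any event E, ν(C^{1−ε}(E) ∩ E) ≥ (1 − 2ε)·ν(C^{1−ε}(E)), where C^{1−ε} is the common (1−ε)-belief operator. (Equation (5.11) of Monderer–Samet, used to show the two variants of the KM distance induce the same topology.) -/
open MeasureTheory

/-- Mutual p-belief operator associated with cell maps `cell i`. -/
noncomputable def Bp {Ω : Type*} [MeasurableSpace Ω] (ν : Measure Ω) {N : ℕ}
    (cell : Fin N → Ω → Set Ω) (p : ℝ) (E : Set Ω) : Set Ω :=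
  ⋂ i, {ω | p ≤ condProb ν E (cell i ω)}

/-- Common p-belief operator: intersection of all iterates `(B^p)^m`, `m ≥ 1`. -/
noncomputable def Cp {Ω : Type*} [MeasurableSpace Ω] (ν : Measure Ω) {N : ℕ}
    (cell : Fin N → Ω → Set Ω) (p : ℝ) (E : Set Ω) : Set Ω :=
  ⋂ m : ℕ, (Bp ν cell p)^[m + 1] E

theorem stmt_17 {Ω : Type*} [MeasurableSpace Ω] [Countable Ω] [MeasurableSingletonClass Ω]
    (ν : Measure Ω) [IsProbabilityMeasure ν]
    {N : ℕ} (hN : 1 ≤ N) (cell : Fin N → Ω → Set Ω)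
    (hmem : ∀ i ω, ω ∈ cell i ω)
    (hpart : ∀ i ω ω', ω' ∈ cell i ω → cell i ω' = cell i ω)
    (hmeas : ∀ i ω, MeasurableSet (cell i ω))
    (hpos : ∀ i ω, ν (cell i ω) ≠ 0)
    (ε : ℝ) (hε0 : 0 ≤ ε) (hε1 : ε ≤ 1)
    (E : Set Ω) (hE : MeasurableSet E) :
    (1 - 2 * ε) * (ν (Cp ν cell (1 - ε) E)).toReal ≤
      (ν (Cp ν cell (1 - ε) E ∩ E)).toReal := by
  classical
  have measAll : ∀ s : Set Ω, MeasurableSet s := fun s => (Set.to_countable s).measurableSet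
  by_cases hε : ε < 1/2
  swap
  · have h1 : 1 - 2*ε ≤ 0 := by
      push_neg at hε; linarith
    calc (1 - 2 * ε) * (ν (Cp ν cell (1 - ε) E)).toReal ≤ 0 :=
          mul_nonpos_of_nonpos_of_nonneg h1 ENNReal.toReal_nonneg
      _ ≤ _ := ENNReal.toReal_nonneg
  set p : ℝ := 1 - ε with hpdef
  have hp0 : 0 < p := by simp only [hpdef]; linarith
  set C : Set Ω := Cp ν cell p E with hCdef
  set f : Set Ω → Set Ω := Bp ν cell p with hfdef
  have cellfin : ∀ (i : Fin N) (ω : Ω), ν (cell i ω) ≠ ⊤ := fun i ω => measure_ne_top ν _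
  have cellpos : ∀ (i : Fin N) (ω : Ω), 0 < (ν (cell i ω)).toReal :=
    fun i ω => ENNReal.toReal_pos (hpos i ω) (cellfin i ω)
  -- conditional probability bound implies measure bound
  have condToReal : ∀ (F : Set Ω) (i : Fin N) (ω : Ω), p ≤ condProb ν F (cell i ω) →
      p * (ν (cell i ω)).toReal ≤ (ν (F ∩ cell i ω)).toReal := by
    intro F i ω h
    rw [condProb] at h
    exact (le_div_iff₀ (cellpos i ω)).mp h
  have condToMeas : ∀ (F : Set Ω) (i : Fin N) (ω : Ω), p ≤ condProb ν F (cell i ω) →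
      ENNReal.ofReal p * ν (cell i ω) ≤ ν (F ∩ cell i ω) := by
    intro F i ω h
    have h2 := condToReal F i ω h
    calc ENNReal.ofReal p * ν (cell i ω)
        = ENNReal.ofReal (p * (ν (cell i ω)).toReal) := by
          rw [ENNReal.ofReal_mul hp0.le, ENNReal.ofReal_toReal (cellfin i ω)]
      _ ≤ ENNReal.ofReal ((ν (F ∩ cell i ω)).toReal) := ENNReal.ofReal_le_ofReal h2
      _ ≤ ν (F ∩ cell i ω) := ENNReal.ofReal_toReal_le
  have nonem : ∀ (F : Set Ω) (i : Fin N) (ω : Ω), p ≤ condProb ν F (cell i ω) →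
      (F ∩ cell i ω).Nonempty := by
    intro F i ω h
    rw [Set.nonempty_iff_ne_empty]
    intro hcontra
    have h2 := condToReal F i ω h
    rw [hcontra, measure_empty] at h2
    simp only [ENNReal.toReal_zero] at h2
    nlinarith [cellpos i ω]
  have memBp : ∀ (F : Set Ω) (ω : Ω), ω ∈ Bp ν cell p F ↔
      ∀ i, p ≤ condProb ν F (cell i ω) := by
    intro F ω
    simp [Bp]
  -- Key structural fact: Bp ∘ Bp ⊆ Bp
  have hBB : ∀ F : Set Ω, Bp ν cell p (Bp ν cell p F) ⊆ Bp ν cell p F := by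
    intro F ω hω
    rw [memBp] at hω ⊢
    intro i
    obtain ⟨ω'', hw1, hw2⟩ := nonem _ i ω (hω i)
    have h3 := (memBp F ω'').mp hw1 i
    rwa [hpart i ω ω'' hw2] at h3
  -- iterates decrease
  have Ddec : ∀ m : ℕ, f^[m+2] E ⊆ f^[m+1] E := by
    intro m
    have e1 : f^[m+2] E = f (f (f^[m] E)) := by
      rw [show m + 2 = (m+1)+1 from rfl, Function.iterate_succ_apply',
        Function.iterate_succ_apply']
    have e2 : f^[m+1] E = f (f^[m] E) := Function.iterate_succ_apply' f m E
    rw [e1, e2]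
    exact hBB _
  have Danti : Antitone (fun m : ℕ => f^[m+1] E) :=
    antitone_nat_of_succ_le fun m => Ddec m
  have CsubD : ∀ m : ℕ, C ⊆ f^[m+1] E := by
    intro m
    rw [hCdef]
    exact Set.iInter_subset _ m
  -- evidentness: on each cell meeting C, C has conditional mass ≥ p
  have evid : ∀ (i : Fin N) (ω₀ : Ω), ω₀ ∈ C →
      ENNReal.ofReal p * ν (cell i ω₀) ≤ ν (C ∩ cell i ω₀) := by
    intro i ω₀ hω₀
    have hCcap : C ∩ cell i ω₀ = ⋂ m : ℕ, (f^[m+1] E ∩ cell i ω₀) := by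
      rw [hCdef]
      simp only [Cp]
      rw [Set.iInter_inter]
    rw [hCcap]
    have hmono : Antitone (fun m : ℕ => f^[m+1] E ∩ cell i ω₀) :=
      fun m n hmn => Set.inter_subset_inter_left _ (Danti hmn)
    rw [hmono.measure_iInter (fun m => (measAll _).nullMeasurableSet)
      ⟨0, measure_ne_top ν _⟩]
    refine le_iInf fun m => ?_
    have h1 : ω₀ ∈ f (f^[m+1] E) := by
      have := CsubD (m+1) hω₀
      rwa [show m + 1 + 1 = (m+1)+1 from rfl, Function.iterate_succ_apply'] at this
    have h2 := (memBp _ ω₀).mp h1 i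
    exact condToMeas _ i ω₀ h2
  -- belief of E on each cell meeting C
  have evE : ∀ (i : Fin N) (ω₀ : Ω), ω₀ ∈ C →
      ENNReal.ofReal p * ν (cell i ω₀) ≤ ν (E ∩ cell i ω₀) := by
    intro i ω₀ hω₀
    have h1 : ω₀ ∈ f E := by
      have := CsubD 0 hω₀
      rwa [Function.iterate_one] at this
    exact condToMeas _ i ω₀ ((memBp _ ω₀).mp h1 i)
  have i0 : Fin N := ⟨0, hN⟩
  -- per-cell inequality
  have percell : ∀ ω₀ : Ω, ω₀ ∈ C →
      ENNReal.ofReal (1 - 2*ε) * ν (C ∩ cell i0 ω₀) ≤ ν ((C ∩ E) ∩ cell i0 ω₀) := by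
    intro ω₀ hω₀
    set π := cell i0 ω₀ with hπ
    have hfinC : ν (C ∩ π) ≠ ⊤ := measure_ne_top ν _
    have hfinE : ν (E ∩ π) ≠ ⊤ := measure_ne_top ν _
    have hfinCE : ν ((C ∩ E) ∩ π) ≠ ⊤ := measure_ne_top ν _
    have ha : p * (ν π).toReal ≤ (ν (C ∩ π)).toReal := by
      have := evid i0 ω₀ hω₀
      have := ENNReal.toReal_mono hfinC this
      rwa [ENNReal.toReal_mul, ENNReal.toReal_ofReal hp0.le] at this
    have hb : p * (ν π).toReal ≤ (ν (E ∩ π)).toReal := by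
      have := evE i0 ω₀ hω₀
      have := ENNReal.toReal_mono hfinE this
      rwa [ENNReal.toReal_mul, ENNReal.toReal_ofReal hp0.le] at this
    have hie : ν ((C ∩ π) ∪ (E ∩ π)) + ν ((C ∩ π) ∩ (E ∩ π)) = ν (C ∩ π) + ν (E ∩ π) :=
      measure_union_add_inter _ (measAll _)
    have hinter : (C ∩ π) ∩ (E ∩ π) = (C ∩ E) ∩ π := by
      ext x; simp only [Set.mem_inter_iff]; tauto
    have hub : ν ((C ∩ π) ∪ (E ∩ π)) ≤ ν π := by
      apply measure_mono
      intro x hx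
      rcases hx with hx | hx <;> exact hx.2
    have hsum : (ν (C ∩ π)).toReal + (ν (E ∩ π)).toReal ≤
        (ν π).toReal + (ν ((C ∩ E) ∩ π)).toReal := by
      rw [hinter] at hie
      have h1 : ν (C ∩ π) + ν (E ∩ π) ≤ ν π + ν ((C ∩ E) ∩ π) := by
        rw [← hie]
        exact add_le_add_left hub _
      have h2 := ENNReal.toReal_mono (by
        exact ENNReal.add_ne_top.mpr ⟨measure_ne_top ν _, hfinCE⟩) h1
      rwa [ENNReal.toReal_add (measure_ne_top ν _) hfinE,
        ENNReal.toReal_add (measure_ne_top ν _) hfinCE] at h2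
    have hCle : (ν (C ∩ π)).toReal ≤ (ν π).toReal :=
      ENNReal.toReal_mono (measure_ne_top ν _) (measure_mono Set.inter_subset_right)
    have hreal : (1 - 2*ε) * (ν (C ∩ π)).toReal ≤ (ν ((C ∩ E) ∩ π)).toReal := by
      have hεhalf : 0 ≤ 1 - 2*ε := by linarith
      nlinarith [ENNReal.toReal_nonneg (a := ν (C ∩ π))]
    calc ENNReal.ofReal (1 - 2*ε) * ν (C ∩ π)
        = ENNReal.ofReal ((1 - 2*ε) * (ν (C ∩ π)).toReal) := by
          rw [ENNReal.ofReal_mul (by linarith), ENNReal.ofReal_toReal hfinC]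
      _ ≤ ENNReal.ofReal ((ν ((C ∩ E) ∩ π)).toReal) := ENNReal.ofReal_le_ofReal hreal
      _ ≤ ν ((C ∩ E) ∩ π) := ENNReal.ofReal_toReal_le
  -- sum over the (disjoint) cells of player i0 meeting C
  set S : Set (Set Ω) := (fun ω => cell i0 ω) '' C with hSdef
  have hSc : S.Countable := (Set.to_countable C).image _
  have hdisj : S.Pairwise (Disjoint (α := Set Ω)) := by
    rintro π₁ ⟨ω₁, -, rfl⟩ π₂ ⟨ω₂, -, rfl⟩ hne
    rw [Set.disjoint_left]
    intro x hx1 hx2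
    exact hne (by
      show cell i0 ω₁ = cell i0 ω₂
      rw [← hpart i0 ω₁ x hx1, hpart i0 ω₂ x hx2])
  have cover : ∀ (T : Set Ω), T ⊆ C → T = ⋃ π ∈ S, (T ∩ π) := by
    intro T hT
    ext x
    constructor
    · intro hx
      refine Set.mem_biUnion ⟨x, hT hx, rfl⟩ ⟨hx, hmem i0 x⟩
    · intro hx
      obtain ⟨π, -, hx2, -⟩ := Set.mem_iUnion₂.mp hx
      exact hx2
  have disjfam : ∀ (T : Set Ω), S.PairwiseDisjoint (fun π => T ∩ π) := by
    intro T π₁ h1 π₂ h2 hne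
    exact (hdisj h1 h2 hne).mono Set.inter_subset_right Set.inter_subset_right
  have hsumC : ν C = ∑' π : S, ν (C ∩ (π : Set Ω)) := by
    conv_lhs => rw [cover C subset_rfl]
    exact measure_biUnion hSc (disjfam C) (fun b _ => measAll _)
  have hsumCE : ν (C ∩ E) = ∑' π : S, ν ((C ∩ E) ∩ (π : Set Ω)) := by
    conv_lhs => rw [cover (C ∩ E) Set.inter_subset_left]
    exact measure_biUnion hSc (disjfam (C ∩ E)) (fun b _ => measAll _)
  have key : ENNReal.ofReal (1 - 2*ε) * ν C ≤ ν (C ∩ E) := by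
    rw [hsumC, hsumCE, ← ENNReal.tsum_mul_left]
    refine ENNReal.tsum_le_tsum fun π => ?_
    obtain ⟨ω₀, hω₀, hπ⟩ := π.2
    rw [← hπ]
    exact percell ω₀ hω₀
  have hfinal := ENNReal.toReal_mono (measure_ne_top ν _) key
  rwa [ENNReal.toReal_mul, ENNReal.toReal_ofReal (by linarith)] at hfinal
end
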